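/- Let n ≥ 1, let κ ∈ {1, −1}, and let a ∈ Mat_n. Suppose y : ℂ → Mat_n is twice differentiable and satisfies the matrix Painlevé II equation P₂¹: y''(z) = κ[y(z), y'(z)] + 2 y(z)³ + z·y(z) + a for all z. For ζ ∈ ℂ with ζ ≠ 0 define w(z) = κ[y(z), y'(z)] + a and the 2×2 block matrices (with n×n blocks) B(ζ,z) = [[ζ·I, y(z)], [y(z), −ζ·I]] and A(ζ,z) = −4ζ·B(ζ,z) + [[2 y(z)² + z·I, −2 y'(z)], [2 y'(z), −2 y(z)² − z·I]] − ζ⁻¹·[[κ·w(z), w(z)], [w(z), κ·w(z)]]. Then for every ζ ≠ 0 and every z: ∂_z A(ζ,z) = ∂_ζ B(ζ,z) + B(ζ,z) A(ζ,z) − A(ζ,z) B(ζ,z), where ∂_ζ B = [[I, 0], [0, −I]]. -/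

import Mathlib

/-!
Write `σ₃ = [[I, 0], [0, −I]]` and `Q = [[0, y], [y, 0]]`, so that `B = ζσ₃ + Q` and
`A = −4ζB + C − ζ⁻¹N`, where `C` and `N` are the two remaining block matrices in `A`.
As `[B, B] = 0`, `[B, A] = ζ[σ₃, C] + [Q, C] − [σ₃, N] − ζ⁻¹[Q, N]`, so the Lax equation splits
by powers of `ζ` into `−4Q' = [σ₃, C]`, which holds identically, `C' = σ₃ + [Q, C] − [σ₃, N]`,
whose off-diagonal blocks are P₂¹ itself, and `N' = [Q, N]`. The last one holds because `y''`
and `w` differ by `2y³ + zy`, which commutes with `y`, so `w' = κ[y, y''] = κ[y, w]`, and `κ² = 1`.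
-/

attribute [local instance] Matrix.normedAddCommGroup Matrix.normedSpace

/-- `w(z) = κ[y, y'] + a`. -/
noncomputable def wP21 (n : ℕ) (κ : ℂ) (a : Matrix (Fin n) (Fin n) ℂ)
    (y : ℂ → Matrix (Fin n) (Fin n) ℂ) (z : ℂ) : Matrix (Fin n) (Fin n) ℂ :=
  κ • (y z * deriv y z - deriv y z * y z) + a

/-- The matrix `B(ζ,z) = [[ζI, y(z)], [y(z), −ζI]]`. -/
noncomputable def BlaxP21 (n : ℕ) (y : ℂ → Matrix (Fin n) (Fin n) ℂ) (ζ z : ℂ) :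
    Matrix (Fin n ⊕ Fin n) (Fin n ⊕ Fin n) ℂ :=
  Matrix.fromBlocks (ζ • 1) (y z) (y z) (-(ζ • 1))

/-- The matrix
`A(ζ,z) = −4ζB + [[2y²+z, −2y'], [2y', −2y²−z]] − ζ⁻¹ [[κw, w], [w, κw]]`. -/
noncomputable def AlaxP21 (n : ℕ) (κ : ℂ) (a : Matrix (Fin n) (Fin n) ℂ)
    (y : ℂ → Matrix (Fin n) (Fin n) ℂ) (ζ z : ℂ) :
    Matrix (Fin n ⊕ Fin n) (Fin n ⊕ Fin n) ℂ :=
  (-(4 * ζ)) • BlaxP21 n y ζ z +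
    Matrix.fromBlocks
      (2 * (y z)^2 + z • 1) (-(2 * deriv y z)) (2 * deriv y z) (-(2 * (y z)^2) - z • 1)
    - ζ⁻¹ • Matrix.fromBlocks
        (κ • wP21 n κ a y z) (wP21 n κ a y z) (wP21 n κ a y z) (κ • wP21 n κ a y z)

open Matrix

theorem Matrix.fromBlocks_sub {l m n o α : Type*} [Sub α] (A : Matrix n l α) (B : Matrix n m α)
    (C : Matrix o l α) (D : Matrix o m α) (A' : Matrix n l α) (B' : Matrix n m α)
    (C' : Matrix o l α) (D' : Matrix o m α) :
    fromBlocks A B C D - fromBlocks A' B' C' D' =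
      fromBlocks (A - A') (B - B') (C - C') (D - D') := by
  ext (i | i) (j | j) <;> rfl

theorem lax_equation_of_laurent_coeffs {𝕜 R : Type*} [Field 𝕜] [Ring R] [Algebra 𝕜 R]
    {s q c m q' c' m' a b : R} {lam ζ : 𝕜} (hζ : ζ ≠ 0)
    (hb : b = ζ • s + q) (ha : a = -(lam * ζ) • b + c - ζ⁻¹ • m)
    (hlead : c * s - s * c = lam • q') (hconst : c' = s + (q * c - c * q) - (s * m - m * s))
    (hres : m' = q * m - m * q) :
    -(lam * ζ) • q' + c' - ζ⁻¹ • m' = s + b * a - a * b := by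
  have hcomm : b * a - a * b =
      -(ζ • (c * s - s * c)) + (q * c - c * q) - (s * m - m * s) - ζ⁻¹ • (q * m - m * q) := by
    subst ha hb
    simp only [mul_add, add_mul, mul_sub, sub_mul, smul_mul_assoc, mul_smul_comm]
    match_scalars <;> field_simp <;> ring
  rw [add_sub_assoc s, hcomm, hlead, hconst, hres]
  module

section MatrixCalculus

variable {𝕜 : Type*} [NontriviallyNormedField 𝕜] {l m o p : Type*} {x : 𝕜}

theorem hasDerivAt_matrix_iff [Fintype o] {f : 𝕜 → Matrix m o 𝕜} {f' : Matrix m o 𝕜} :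
    HasDerivAt f f' x ↔ ∀ i j, HasDerivAt (fun w => f w i j) (f' i j) x :=
  hasDerivAt_pi.trans (forall_congr' fun _ => hasDerivAt_pi)

theorem HasDerivAt.matrix_mul [Fintype m] [Fintype o] {f : 𝕜 → Matrix l m 𝕜}
    {g : 𝕜 → Matrix m o 𝕜} {f' : Matrix l m 𝕜} {g' : Matrix m o 𝕜} (hf : HasDerivAt f f' x)
    (hg : HasDerivAt g g' x) :
    HasDerivAt (fun w => f w * g w) (f' * g x + f x * g') x := by
  rw [hasDerivAt_matrix_iff] at hf hg ⊢
  intro i j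
  simp only [mul_apply, Matrix.add_apply, ← Finset.sum_add_distrib]
  exact HasDerivAt.fun_sum fun k _ => (hf i k).mul (hg k j)

theorem HasDerivAt.const_matrix_mul [Fintype l] [Fintype m] [Fintype o] (C : Matrix l m 𝕜)
    {g : 𝕜 → Matrix m o 𝕜} {g' : Matrix m o 𝕜} (hg : HasDerivAt g g' x) :
    HasDerivAt (fun w => C * g w) (C * g') x := by
  simpa using (hasDerivAt_const x C).matrix_mul hg

theorem HasDerivAt.matrix_fromBlocks [Fintype o] [Fintype p] {fA : 𝕜 → Matrix l o 𝕜}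
    {fB : 𝕜 → Matrix l p 𝕜} {fC : 𝕜 → Matrix m o 𝕜} {fD : 𝕜 → Matrix m p 𝕜} {A' : Matrix l o 𝕜}
    {B' : Matrix l p 𝕜} {C' : Matrix m o 𝕜} {D' : Matrix m p 𝕜} (hA : HasDerivAt fA A' x)
    (hB : HasDerivAt fB B' x) (hC : HasDerivAt fC C' x) (hD : HasDerivAt fD D' x) :
    HasDerivAt (fun w => fromBlocks (fA w) (fB w) (fC w) (fD w)) (fromBlocks A' B' C' D') x := by
  rw [hasDerivAt_matrix_iff] at hA hB hC hD ⊢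
  rintro (i | i) (j | j)
  exacts [hA i j, hB i j, hC i j, hD i j]

theorem hasDerivAt_smul_one [Fintype m] [DecidableEq m] :
    HasDerivAt (fun w : 𝕜 => w • (1 : Matrix m m 𝕜)) 1 x :=
  ((hasDerivAt_id x).smul_const (1 : Matrix m m 𝕜)).congr_deriv (one_smul 𝕜 _)

end MatrixCalculus

section P21

variable {n : ℕ} {κ : ℂ} {a : Matrix (Fin n) (Fin n) ℂ} {y : ℂ → Matrix (Fin n) (Fin n) ℂ}
  {ζ z : ℂ}

def IsP21SolutionAt (κ : ℂ) (a : Matrix (Fin n) (Fin n) ℂ) (y : ℂ → Matrix (Fin n) (Fin n) ℂ)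
    (z : ℂ) : Prop :=
  deriv (deriv y) z = κ • (y z * deriv y z - deriv y z * y z) + (2 : ℂ) • y z ^ 3 + z • y z + a

noncomputable def QlaxP21 (n : ℕ) (y : ℂ → Matrix (Fin n) (Fin n) ℂ) (z : ℂ) :
    Matrix (Fin n ⊕ Fin n) (Fin n ⊕ Fin n) ℂ :=
  fromBlocks 0 (y z) (y z) 0

noncomputable def ClaxP21 (n : ℕ) (y : ℂ → Matrix (Fin n) (Fin n) ℂ) (z : ℂ) :
    Matrix (Fin n ⊕ Fin n) (Fin n ⊕ Fin n) ℂ :=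
  fromBlocks (2 * (y z)^2 + z • 1) (-(2 * deriv y z)) (2 * deriv y z) (-(2 * (y z)^2) - z • 1)

noncomputable def NlaxP21 (n : ℕ) (κ : ℂ) (a : Matrix (Fin n) (Fin n) ℂ)
    (y : ℂ → Matrix (Fin n) (Fin n) ℂ) (z : ℂ) : Matrix (Fin n ⊕ Fin n) (Fin n ⊕ Fin n) ℂ :=
  fromBlocks (κ • wP21 n κ a y z) (wP21 n κ a y z) (wP21 n κ a y z) (κ • wP21 n κ a y z)

theorem BlaxP21_eq : BlaxP21 n y ζ z = ζ • fromBlocks 1 0 0 (-1) + QlaxP21 n y z := by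
  simp [BlaxP21, QlaxP21, fromBlocks_smul, fromBlocks_add]

theorem AlaxP21_eq : AlaxP21 n κ a y ζ =
    -(4 * ζ) • BlaxP21 n y ζ + ClaxP21 n y - ζ⁻¹ • NlaxP21 n κ a y := rfl

theorem hasDerivAt_BlaxP21_spectral :
    HasDerivAt (fun ζ => BlaxP21 n y ζ z) (fromBlocks 1 0 0 (-1)) ζ :=
  hasDerivAt_smul_one.matrix_fromBlocks (hasDerivAt_const _ _) (hasDerivAt_const _ _)
    hasDerivAt_smul_one.neg

theorem hasDerivAt_BlaxP21 (hy : DifferentiableAt ℂ y z) :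
    HasDerivAt (BlaxP21 n y ζ) (QlaxP21 n (deriv y) z) z :=
  (hasDerivAt_const _ _).matrix_fromBlocks hy.hasDerivAt hy.hasDerivAt (hasDerivAt_const _ _)

theorem commutator_ClaxP21_sigma3 :
    ClaxP21 n y z * fromBlocks 1 0 0 (-1) - fromBlocks 1 0 0 (-1) * ClaxP21 n y z =
      (4 : ℂ) • QlaxP21 n (deriv y) z := by
  simp only [ClaxP21, QlaxP21, fromBlocks_multiply, fromBlocks_sub, fromBlocks_smul]
  congr 1 <;> simp [two_mul] <;> module

theorem IsP21SolutionAt.commutator_deriv_deriv (hP : IsP21SolutionAt κ a y z) :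
    y z * deriv (deriv y) z - deriv (deriv y) z * y z =
      y z * wP21 n κ a y z - wP21 n κ a y z * y z := by
  rw [hP, wP21]
  simp only [mul_add, add_mul, mul_smul_comm, smul_mul_assoc, ← pow_succ, ← pow_succ']
  abel

theorem hasDerivAt_wP21 (hy : DifferentiableAt ℂ y z) (hy' : DifferentiableAt ℂ (deriv y) z) :
    HasDerivAt (wP21 n κ a y) (κ • (y z * deriv (deriv y) z - deriv (deriv y) z * y z)) z := by
  -- Ascribing the type puts the sum back on the default matrix instances, where `abel` applies.
  have h : HasDerivAt (wP21 n κ a y) (κ • (deriv y z * deriv y z + y z * deriv (deriv y) z -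
      (deriv (deriv y) z * y z + deriv y z * deriv y z))) z :=
    (((hy.hasDerivAt.matrix_mul hy'.hasDerivAt).sub
      (hy'.hasDerivAt.matrix_mul hy.hasDerivAt)).const_smul κ).add_const a
  exact h.congr_deriv (by congr 1; abel)

theorem hasDerivAt_NlaxP21 (hκ : κ * κ = 1) (hy : DifferentiableAt ℂ y z)
    (hy' : DifferentiableAt ℂ (deriv y) z) (hP : IsP21SolutionAt κ a y z) :
    HasDerivAt (NlaxP21 n κ a y)
      (QlaxP21 n y z * NlaxP21 n κ a y z - NlaxP21 n κ a y z * QlaxP21 n y z) z := by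
  have hw := hasDerivAt_wP21 (κ := κ) (a := a) hy hy'
  rw [hP.commutator_deriv_deriv] at hw
  refine ((hw.const_smul κ).matrix_fromBlocks hw hw (hw.const_smul κ)).congr_deriv ?_
  simp only [QlaxP21, NlaxP21, fromBlocks_multiply, fromBlocks_sub]
  congr 1 <;> simp [smul_smul, hκ, smul_sub]

theorem hasDerivAt_ClaxP21 (hy : DifferentiableAt ℂ y z)
    (hy' : DifferentiableAt ℂ (deriv y) z) (hP : IsP21SolutionAt κ a y z) :
    HasDerivAt (ClaxP21 n y)
      (fromBlocks 1 0 0 (-1) + (QlaxP21 n y z * ClaxP21 n y z - ClaxP21 n y z * QlaxP21 n y z)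
        - (fromBlocks 1 0 0 (-1) * NlaxP21 n κ a y z
          - NlaxP21 n κ a y z * fromBlocks 1 0 0 (-1))) z := by
  have hsq : HasDerivAt (fun w => y w ^ 2) (deriv y z * y z + y z * deriv y z) z := by
    simp_rw [sq]
    exact hy.hasDerivAt.matrix_mul hy.hasDerivAt
  have hd : HasDerivAt (ClaxP21 n y)
      (fromBlocks (2 * (deriv y z * y z + y z * deriv y z) + 1) (-(2 * deriv (deriv y) z))
        (2 * deriv (deriv y) z) (-(2 * (deriv y z * y z + y z * deriv y z)) - 1)) z :=
    ((hsq.const_matrix_mul 2).add hasDerivAt_smul_one).matrix_fromBlocks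
      (hy'.hasDerivAt.const_matrix_mul 2).neg (hy'.hasDerivAt.const_matrix_mul 2)
      ((hsq.const_matrix_mul 2).neg.sub hasDerivAt_smul_one)
  refine hd.congr_deriv ?_
  rw [hP]
  simp only [ClaxP21, QlaxP21, NlaxP21, wP21, fromBlocks_multiply, fromBlocks_sub, fromBlocks_add]
  congr 1 <;>
    simp only [two_mul, pow_succ, pow_zero, one_mul, mul_add, add_mul, mul_sub, sub_mul, mul_neg,
      neg_mul, mul_smul_comm, smul_mul_assoc, mul_one, mul_zero, zero_mul, mul_assoc] <;>
    module

end P21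

theorem matrixP21_lax_pair_general (n : ℕ)
    (κ : ℂ) (hκ : κ = 1 ∨ κ = -1)
    (a : Matrix (Fin n) (Fin n) ℂ)
    (y : ℂ → Matrix (Fin n) (Fin n) ℂ)
    (hy : Differentiable ℂ y) (hy' : Differentiable ℂ (deriv y))
    (heq : ∀ z : ℂ, deriv (deriv y) z =
      κ • (y z * deriv y z - deriv y z * y z) + (2 : ℂ) • (y z) ^ 3 + z • y z + a) :
    ∀ ζ z : ℂ, ζ ≠ 0 →
      deriv (fun w => AlaxP21 n κ a y ζ w) z =
        Matrix.fromBlocks 1 0 0 (-1)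
          + BlaxP21 n y ζ z * AlaxP21 n κ a y ζ z
          - AlaxP21 n κ a y ζ z * BlaxP21 n y ζ z ∧
      deriv (fun w => BlaxP21 n y w z) ζ = Matrix.fromBlocks 1 0 0 (-1) := by
  intro ζ z hζ
  have hκ2 : κ * κ = 1 := by rcases hκ with rfl | rfl <;> norm_num
  have hA : HasDerivAt (AlaxP21 n κ a y ζ) _ z := AlaxP21_eq ▸
    (((hasDerivAt_BlaxP21 (hy z)).const_smul (-(4 * ζ))).add
      (hasDerivAt_ClaxP21 (hy z) (hy' z) (heq z))).sub
      ((hasDerivAt_NlaxP21 hκ2 (hy z) (hy' z) (heq z)).const_smul ζ⁻¹)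
  exact ⟨hA.deriv.trans (lax_equation_of_laurent_coeffs hζ BlaxP21_eq
    (congrFun AlaxP21_eq z) commutator_ClaxP21_sigma3 rfl rfl), hasDerivAt_BlaxP21_spectral.deriv⟩

/-- isomonodromic Lax pair `A' = B_ζ + [B, A]` for the matrix
Painlevé II equation P₂¹, with `B_ζ = [[I,0],[0,−I]]`. -/
theorem matrixP21_lax_pair (n : ℕ) (hn : 1 ≤ n)
    (κ : ℂ) (hκ : κ = 1 ∨ κ = -1)
    (a : Matrix (Fin n) (Fin n) ℂ)
    (y : ℂ → Matrix (Fin n) (Fin n) ℂ)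
    (hy : Differentiable ℂ y) (hy' : Differentiable ℂ (deriv y))
    (heq : ∀ z : ℂ, deriv (deriv y) z =
      κ • (y z * deriv y z - deriv y z * y z) + (2 : ℂ) • (y z) ^ 3 + z • y z + a) :
    ∀ ζ z : ℂ, ζ ≠ 0 →
      deriv (fun w => AlaxP21 n κ a y ζ w) z =
        Matrix.fromBlocks 1 0 0 (-1)
          + BlaxP21 n y ζ z * AlaxP21 n κ a y ζ z
          - AlaxP21 n κ a y ζ z * BlaxP21 n y ζ z ∧
      deriv (fun w => BlaxP21 n y w z) ζ = Matrix.fromBlocks 1 0 0 (-1) :=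
  matrixP21_lax_pair_general n κ hκ a y hy hy' heq
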